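/- lim_{x→0⁺} [log(1+x²) - log(x/arsinh(x))] / [log(1+x²) - (1/2)·log(1-x²)] = 5/9, and lim_{x→1⁻} of the same expression equals 0. -/

import Mathlib

/-!
Near `0`, each logarithm is `≈ t` for its small argument `t`: `log (1 + x²) ~ x²`,
`log (1 - x²) ~ -x²`, and `log (x / arsinh x) ~ x / arsinh x - 1 ~ x² / 6` because
`x - arsinh x ~ x³ / 6` (L'Hôpital). After dividing numerator and denominator by `x²` the
quotient tends to `(1 - 1/6) / (1 + 1/2) = 5/9`. Near `1` the numerator stays bounded while
`-log (1 - x²) → ∞`.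
-/
noncomputable def r (x : ℝ) : ℝ :=
  (Real.log (1 + x ^ 2) - Real.log (x / Real.arsinh x)) /
    (Real.log (1 + x ^ 2) - (1 / 2) * Real.log (1 - x ^ 2))

open Real Filter Set Topology

theorem HasDerivAt.tendsto_comp_div {α : Type*} {l : Filter α} {f : ℝ → ℝ} {f' c : ℝ}
    {u v : α → ℝ} (hf : HasDerivAt f f' 0) (hf0 : f 0 = 0) (hu : Tendsto u l (𝓝 0))
    (huv : Tendsto (fun a => u a / v a) l (𝓝 c)) :
    Tendsto (fun a => f (u a) / v a) l (𝓝 (f' * c)) := by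
  have hslope : Tendsto (dslope f 0) (𝓝 0) (𝓝 f') := by
    simpa [dslope_same, hf.deriv] using
      (continuousAt_dslope_same.2 hf.differentiableAt).tendsto
  refine ((hslope.comp hu).mul huv).congr fun a => ?_
  -- `dslope f 0 t * t = f t` also at `t = 0`, since `f 0 = 0`.
  by_cases hua : u a = 0
  · simp [hua, hf0]
  · simp only [Function.comp, dslope_of_ne f hua, slope_def_field, hf0, sub_zero]
    exact div_mul_div_cancel₀ hua

theorem hasDerivAt_log_one_add_zero : HasDerivAt (fun t => log (1 + t)) 1 0 := by
  simpa using ((hasDerivAt_id (0 : ℝ)).const_add 1).log (by norm_num)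

theorem hasDerivAt_one_sub_inv_sqrt_one_add_zero :
    HasDerivAt (fun t => 1 - (√(1 + t))⁻¹) (1 / 2) 0 := by
  have := (((hasDerivAt_id (0 : ℝ)).const_add 1).sqrt (by norm_num)).inv (by norm_num)
  simpa using this.const_sub 1

theorem tendsto_sq_div_sq : Tendsto (fun x : ℝ => x ^ 2 / x ^ 2) (𝓝[≠] 0) (𝓝 1) :=
  tendsto_const_nhds.congr' <| eventually_nhdsWithin_of_forall fun _ hx =>
    (div_self (pow_ne_zero 2 hx)).symm

theorem tendsto_sq_nhdsNE_zero : Tendsto (fun x : ℝ => x ^ 2) (𝓝[≠] 0) (𝓝 0) := by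
  simpa using ((continuous_pow 2).tendsto (0 : ℝ)).mono_left nhdsWithin_le_nhds

theorem tendsto_log_one_add_sq_div_sq :
    Tendsto (fun x : ℝ => log (1 + x ^ 2) / x ^ 2) (𝓝[≠] 0) (𝓝 1) := by
  simpa using hasDerivAt_log_one_add_zero.tendsto_comp_div (by simp) tendsto_sq_nhdsNE_zero
    tendsto_sq_div_sq

theorem tendsto_log_one_sub_sq_div_sq :
    Tendsto (fun x : ℝ => log (1 - x ^ 2) / x ^ 2) (𝓝[≠] 0) (𝓝 (-1)) := by
  have := hasDerivAt_log_one_add_zero.tendsto_comp_div (by simp)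
    (by simpa using tendsto_sq_nhdsNE_zero.neg)
    (tendsto_sq_div_sq.neg.congr fun x => (neg_div _ _).symm)
  simpa [← sub_eq_add_neg] using this

theorem tendsto_self_div_arsinh : Tendsto (fun x => x / arsinh x) (𝓝[≠] 0) (𝓝 1) := by
  have hd : HasDerivAt arsinh 1 0 := by simpa using hasDerivAt_arsinh 0
  have hself : Tendsto (fun x : ℝ => x / x) (𝓝[≠] 0) (𝓝 1) :=
    tendsto_const_nhds.congr' <| eventually_nhdsWithin_of_forall fun _ hx => (div_self hx).symm
  have := hd.tendsto_comp_div arsinh_zero (tendsto_id.mono_left nhdsWithin_le_nhds) hself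
  rw [one_mul] at this
  simpa using this.inv₀ one_ne_zero

theorem tendsto_sub_arsinh_div_cube :
    Tendsto (fun x => (x - arsinh x) / x ^ 3) (𝓝[≠] 0) (𝓝 (1 / 6)) := by
  refine HasDerivAt.lhopital_zero_nhdsNE (f' := fun x => 1 - (√(1 + x ^ 2))⁻¹)
    (g' := fun x => 3 * x ^ 2)
    (.of_forall fun x => (hasDerivAt_id x).sub (hasDerivAt_arsinh x))
    (.of_forall fun x => by simpa using hasDerivAt_pow 3 x)
    (eventually_nhdsWithin_of_forall fun _ hx => mul_ne_zero three_ne_zero (pow_ne_zero 2 hx))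
    ?_ ?_ ?_
  · exact ((continuous_id.sub continuous_arsinh).tendsto' 0 0 (by simp)).mono_left
      nhdsWithin_le_nhds
  · simpa using ((continuous_pow 3).tendsto (0 : ℝ)).mono_left nhdsWithin_le_nhds
  · have := hasDerivAt_one_sub_inv_sqrt_one_add_zero.tendsto_comp_div (v := fun x => 3 * x ^ 2)
      (by simp) tendsto_sq_nhdsNE_zero ((tendsto_sq_div_sq.div_const 3).congr fun x => by ring)
    convert this using 2
    norm_num

theorem tendsto_log_self_div_arsinh_div_sq :
    Tendsto (fun x => log (x / arsinh x) / x ^ 2) (𝓝[≠] 0) (𝓝 (1 / 6)) := by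
  have hratio : Tendsto (fun x => (x / arsinh x - 1) / x ^ 2) (𝓝[≠] 0) (𝓝 (1 / 6)) := by
    have h := tendsto_sub_arsinh_div_cube.mul tendsto_self_div_arsinh
    rw [mul_one] at h
    refine h.congr' ?_
    filter_upwards [self_mem_nhdsWithin] with x hx
    have ha : arsinh x ≠ 0 := arsinh_eq_zero_iff.not.2 hx
    field_simp
  have := hasDerivAt_log_one_add_zero.tendsto_comp_div (by simp)
    (by simpa using tendsto_self_div_arsinh.sub_const 1) hratio
  simpa using this

theorem tendsto_log_one_sub_sq_nhdsLT_one :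
    Tendsto (fun x : ℝ => log (1 - x ^ 2)) (𝓝[<] 1) atBot := by
  refine tendsto_log_nhdsGT_zero.comp (tendsto_nhdsWithin_iff.2 ⟨?_, ?_⟩)
  · simpa using ((by fun_prop : Continuous fun x : ℝ => 1 - x ^ 2).tendsto 1).mono_left
      nhdsWithin_le_nhds
  · filter_upwards [Ioo_mem_nhdsLT (show (-1 : ℝ) < 1 by norm_num)] with x ⟨hx₀, hx₁⟩
    simp only [mem_Ioi, sub_pos]
    nlinarith

theorem stmt18 :
    Filter.Tendsto r (nhdsWithin 0 (Set.Ioi 0)) (nhds (5 / 9)) ∧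
    Filter.Tendsto r (nhdsWithin 1 (Set.Iio 1)) (nhds 0) := by
  constructor
  · have hnum := tendsto_log_one_add_sq_div_sq.sub tendsto_log_self_div_arsinh_div_sq
    have hden :=
      tendsto_log_one_add_sq_div_sq.sub (tendsto_log_one_sub_sq_div_sq.const_mul (1 / 2))
    have h := (hnum.div hden (by norm_num)).mono_left (nhdsGT_le_nhdsNE 0)
    norm_num at h
    refine h.congr' (eventually_nhdsWithin_of_forall fun x hx => ?_)
    rw [Pi.div_apply, r, ← sub_div, ← mul_div_assoc, ← sub_div,
      div_div_div_cancel_right₀ (pow_pos hx 2).ne']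
  · have hnum : ContinuousAt (fun x => log (1 + x ^ 2) - log (x / arsinh x)) 1 := by
      have := continuous_arsinh
      fun_prop (disch := simp [arsinh_eq_zero_iff])
    have hden : Tendsto (fun x => log (1 + x ^ 2) - 1 / 2 * log (1 - x ^ 2)) (𝓝[<] 1) atTop := by
      have hlog : ContinuousAt (fun x : ℝ => log (1 + x ^ 2)) 1 := by
        fun_prop (disch := positivity)
      refine (hlog.tendsto.mono_left nhdsWithin_le_nhds).add_atTop
        (tendsto_log_one_sub_sq_nhdsLT_one.const_mul_atBot_of_neg (r := -(1 / 2)) (by norm_num))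
        |>.congr fun x => ?_
      ring
    exact (hnum.tendsto.mono_left nhdsWithin_le_nhds).div_atTop hden
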